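/- arXiv:2201.04211 — 4 statements merged into one kernel-verified Lean document; each statement's English description precedes it below -/
import Mathlib

section
/- Let X and X' be n×p real matrices with entries bounded by 1 in absolute value that differ only in their first row, with ‖X − X'‖ ≤ 1 (Frobenius norm). Suppose that for a fixed noise level σ = σ₀ > 0, the mechanism Y(X) = X + C, where C is an n×p matrix of i.i.d. N(0, σ₀²) entries, satisfies (ε, δ)-differential privacy: for every measurable set S of n×p matrices, P[Y(X) ∈ S] ≤ e^ε P[Y(X') ∈ S] + δ. Then the mechanism Y(X) = A X + C, where A is a random n×n orthogonal matrix drawn from the Haar (uniform) distribution on the orthogonal group independently of C, also satisfies (ε, δ)-differential privacy for the same pair X, X'. -/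
/-!
Condition on the rotation `A`. The i.i.d. Gaussian noise matrix `C` is invariant under left
multiplication by an orthogonal matrix, so `A X + C` has the same law as `A (X + C)`: the
rotated mechanism is the additive one followed by the post-processing `Y ↦ A Y`, hence
`(ε, δ)`-private for each fixed orthogonal `A`. Averaging the privacy inequality over `A ∼ μ`
keeps it, since `μ` is a probability measure carried by the orthogonal matrices.
-/

open MeasureTheory ProbabilityTheory Real

noncomputable section

/-- The space of n×p real data matrices, represented as functions. -/
abbrev Mat (n p : ℕ) := Fin n → Fin p → ℝ

/-- Frobenius (L₂) norm of a matrix. -/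
def frob {n p : ℕ} (M : Mat n p) : ℝ := Real.sqrt (∑ i, ∑ j, (M i j) ^ 2)

/-- The distribution of an n×p matrix of i.i.d. N(0, σ²) entries. -/
def gaussNoise (n p : ℕ) (σ : ℝ) : Measure (Mat n p) :=
  Measure.pi fun _ => Measure.pi fun _ => gaussianReal 0 ⟨σ ^ 2, sq_nonneg σ⟩

/-- Matrix product. -/
def mdot {n p m : ℕ} (A : Fin n → Fin p → ℝ) (B : Fin p → Fin m → ℝ) :
    Fin n → Fin m → ℝ := fun i j => ∑ k, A i k * B k j

/-- Matrix transpose. -/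
def transp {n p : ℕ} (M : Mat n p) : Mat p n := fun j i => M i j

/-- Trace of a square matrix. -/
def trace' {n : ℕ} (T : Mat n n) : ℝ := ∑ i, T i i

/-- `A` is an orthogonal matrix: A Aᵀ = I. -/
def IsOrth {n : ℕ} (A : Mat n n) : Prop :=
  mdot A (transp A) = fun i j => if i = j then (1 : ℝ) else 0

/-- Neighboring data sets: they differ in only one row and the Frobenius
norm of the difference is at most 1. -/
def Neighbors {n p : ℕ} (X X' : Mat n p) : Prop :=
  (∃ i, ∀ k, k ≠ i → X k = X' k) ∧ frob (X - X') ≤ 1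

/-- `μ` is the Haar (uniform) probability distribution on the orthogonal group O(n):
a probability measure supported on orthogonal matrices that is invariant under
left translation by any orthogonal matrix. -/
def IsHaarOrth {n : ℕ} (μ : Measure (Mat n n)) : Prop :=
  IsProbabilityMeasure μ ∧ μ {A | IsOrth A}ᶜ = 0 ∧
    ∀ Q : Mat n n, IsOrth Q → μ.map (fun A => mdot Q A) = μ

open WithLp Matrix
open scoped NNReal ENNReal

section GaussianInvariance

variable {E F : Type*} [NormedAddCommGroup E] [InnerProductSpace ℝ E] [CompleteSpace E]
  [MeasurableSpace E] [BorelSpace E] [NormedAddCommGroup F] [InnerProductSpace ℝ F]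
  [CompleteSpace F] [MeasurableSpace F] [BorelSpace F]

lemma charFun_map_continuousLinearMap (μ : Measure E) (L : E →L[ℝ] F) (t : F) :
    charFun (μ.map L) t = charFun μ (L.adjoint t) := by
  rw [charFun_apply, charFun_apply, integral_map L.continuous.aemeasurable (by fun_prop)]
  simp_rw [ContinuousLinearMap.adjoint_inner_right]

variable {ι : Type*} [Fintype ι]

lemma charFun_map_toLp_pi_gaussianReal (v : ℝ≥0) (t : EuclideanSpace ℝ ι) :
    charFun ((Measure.pi fun _ : ι => gaussianReal 0 v).map (toLp 2)) t =
      Complex.exp (-(v * ‖t‖ ^ 2) / 2) := by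
  simp_rw [charFun_pi, charFun_gaussianReal, ← Complex.exp_sum]
  rw [← Complex.ofReal_pow, EuclideanSpace.real_norm_sq_eq]
  push_cast
  simp [Finset.mul_sum, Finset.sum_div, neg_div]

lemma norm_toEuclideanCLM_apply_of_mem_orthogonalGroup [DecidableEq ι] {U : Matrix ι ι ℝ}
    (hU : U ∈ orthogonalGroup ι ℝ) (t : EuclideanSpace ℝ ι) :
    ‖toEuclideanCLM (𝕜 := ℝ) U t‖ = ‖t‖ :=
  Unitary.norm_map ⟨_, Unitary.map_mem (toEuclideanCLM (n := ι) (𝕜 := ℝ)) hU⟩ t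

/-- Proved on characteristic functions: that of the product Gaussian depends on `t` only
through `‖t‖`, and the adjoint of an orthogonal map preserves norms. -/
theorem pi_gaussianReal_map_mulVec [DecidableEq ι] (v : ℝ≥0) {U : Matrix ι ι ℝ}
    (hU : U ∈ orthogonalGroup ι ℝ) :
    (Measure.pi fun _ : ι => gaussianReal 0 v).map U.mulVec =
      Measure.pi fun _ : ι => gaussianReal 0 v := by
  refine charFun_eq_pi_iff.mp fun t => ?_
  have hcomp : (toLp 2 ∘ U.mulVec : (ι → ℝ) → EuclideanSpace ℝ ι) =
      toEuclideanCLM (𝕜 := ℝ) U ∘ toLp 2 := rfl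
  rw [Measure.map_map (by fun_prop) (by fun_prop), hcomp,
    ← Measure.map_map (by fun_prop) (by fun_prop), charFun_map_continuousLinearMap,
    ← ContinuousLinearMap.star_eq_adjoint, ← map_star, charFun_map_toLp_pi_gaussianReal,
    norm_toEuclideanCLM_apply_of_mem_orthogonalGroup (Unitary.star_mem hU),
    ← charFun_map_toLp_pi_gaussianReal, charFun_pi]

end GaussianInvariance

lemma MeasureTheory.Measure.pi_map_curry {ι κ X : Type*} [Fintype ι] [Fintype κ] [MeasurableSpace X]
    (μ : ι → κ → Measure X) [∀ i j, IsProbabilityMeasure (μ i j)] :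
    (Measure.pi fun q : ι × κ => μ q.1 q.2).map (MeasurableEquiv.curry ι κ X) =
      Measure.pi fun i => Measure.pi fun j => μ i j := by
  simp_rw [← Measure.infinitePi_eq_pi, Measure.infinitePi_map_curry]

lemma IsOrth.mem_orthogonalGroup {n : ℕ} {A : Mat n n} (hA : IsOrth A) :
    Matrix.of A ∈ orthogonalGroup (Fin n) ℝ :=
  (mem_orthogonalGroup_iff _ _).mpr hA

lemma mdot_curry {n p : ℕ} (A : Mat n n) (y : Fin n × Fin p → ℝ) :
    mdot A (Function.curry y) =
      Function.curry ((kronecker (Matrix.of A) (1 : Matrix (Fin p) (Fin p) ℝ)).mulVec y) := by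
  funext i j
  simp [mdot, mulVec, dotProduct, one_apply, Fintype.sum_prod_type]

lemma measurable_mdot_left {n p : ℕ} (A : Mat n n) :
    Measurable (fun Z : Mat n p => mdot A Z) := by
  unfold mdot; fun_prop

/-- Flattening `Fin n → Fin p → ℝ` to `Fin n × Fin p → ℝ` turns `mdot A` into the orthogonal
matrix `A ⊗ 1`. -/
theorem pi_gaussianReal_map_mdot {n p : ℕ} (v : ℝ≥0) {A : Mat n n} (hA : IsOrth A) :
    (Measure.pi fun _ : Fin n => Measure.pi fun _ : Fin p => gaussianReal 0 v).map (mdot A) =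
      Measure.pi fun _ : Fin n => Measure.pi fun _ : Fin p => gaussianReal 0 v := by
  have hkron : kronecker (Matrix.of A) (1 : Matrix (Fin p) (Fin p) ℝ) ∈ orthogonalGroup _ ℝ :=
    kronecker_mem_unitary hA.mem_orthogonalGroup (one_mem _)
  rw [← Measure.pi_map_curry, Measure.map_map (measurable_mdot_left A)
    (MeasurableEquiv.measurable _)]
  have hcomp : mdot A ∘ MeasurableEquiv.curry (Fin n) (Fin p) ℝ =
      MeasurableEquiv.curry (Fin n) (Fin p) ℝ ∘ (kronecker (Matrix.of A) 1).mulVec :=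
    funext (mdot_curry A)
  rw [hcomp, ← Measure.map_map (MeasurableEquiv.measurable _) (by fun_prop),
    pi_gaussianReal_map_mulVec _ hkron]

-- The variance `⟨σ ^ 2, _⟩` in `gaussNoise` elaborates at type `{r // 0 ≤ r}` rather than `ℝ≥0`,
-- which instance search does not see through; abstracting it as `v : ℝ≥0` avoids this.
instance isProbabilityMeasure_gaussNoise (n p : ℕ) (σ : ℝ) :
    IsProbabilityMeasure (gaussNoise n p σ) :=
  (fun v : ℝ≥0 => (inferInstance : IsProbabilityMeasure
    (Measure.pi fun _ : Fin n => Measure.pi fun _ : Fin p => gaussianReal 0 v))) _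

lemma gaussNoise_map_mdot {n p : ℕ} (σ : ℝ) {A : Mat n n} (hA : IsOrth A) :
    (gaussNoise n p σ).map (mdot A) = gaussNoise n p σ :=
  pi_gaussianReal_map_mdot _ hA

lemma mdot_add {n p : ℕ} (A : Mat n n) (Z C : Mat n p) :
    mdot A (Z + C) = mdot A Z + mdot A C := by
  funext i j
  simp [mdot, mul_add, Finset.sum_add_distrib]

lemma map_mdot_add_left {n p : ℕ} {ν : Measure (Mat n p)} {A : Mat n n}
    (hν : ν.map (mdot A) = ν) (Z : Mat n p) :
    ν.map (fun C => mdot A Z + C) = (ν.map (fun C => Z + C)).map (mdot A) := by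
  conv_lhs => rw [← hν]
  rw [Measure.map_map (measurable_const_add _) (measurable_mdot_left A),
    Measure.map_map (measurable_mdot_left A) (measurable_const_add _)]
  congr 1
  funext C
  exact (mdot_add A Z C).symm

/-- The `(ε, δ)`-differential-privacy inequality between the output laws `P`, `Q` of a mechanism
on a pair of neighbouring inputs. -/
def DPBound {α : Type*} [MeasurableSpace α] (P Q : Measure α) (ε δ : ℝ) : Prop :=
  ∀ S, MeasurableSet S → P S ≤ ENNReal.ofReal (exp ε) * Q S + ENNReal.ofReal δ

section DPBound

variable {α β γ : Type*} [MeasurableSpace α] [MeasurableSpace β] [MeasurableSpace γ]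
  {ε δ : ℝ}

lemma DPBound.map {P Q : Measure α} (h : DPBound P Q ε δ) {f : α → β} (hf : Measurable f) :
    DPBound (P.map f) (Q.map f) ε δ := fun S hS => by
  rw [Measure.map_apply hf hS, Measure.map_apply hf hS]
  exact h _ (hf hS)

lemma MeasureTheory.Measure.map_prod_apply {μ : Measure α} {ν : Measure β} [SFinite ν] {g : α × β → γ}
    (hg : Measurable g) {S : Set γ} (hS : MeasurableSet S) :
    (μ.prod ν).map g S = ∫⁻ a, ν.map (fun b => g (a, b)) S ∂μ := by
  rw [Measure.map_apply hg hS, Measure.prod_apply (hg hS)]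
  refine lintegral_congr fun a => ?_
  exact (Measure.map_apply (hg.comp measurable_prodMk_left) hS).symm

/-- Privacy is preserved under mixing: a mechanism that draws `a ∼ μ` and then runs a
mechanism that is private for almost every `a` is private. -/
theorem DPBound.prod_map {μ : Measure α} [IsProbabilityMeasure μ] {ν : Measure β} [SFinite ν]
    {g g' : α × β → γ} (hg : Measurable g) (hg' : Measurable g')
    (h : ∀ᵐ a ∂μ, DPBound (ν.map fun b => g (a, b)) (ν.map fun b => g' (a, b)) ε δ) :
    DPBound ((μ.prod ν).map g) ((μ.prod ν).map g') ε δ := fun S hS => by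
  rw [Measure.map_prod_apply hg hS, Measure.map_prod_apply hg' hS]
  calc ∫⁻ a, ν.map (fun b => g (a, b)) S ∂μ
      ≤ ∫⁻ a, (ENNReal.ofReal (exp ε) * ν.map (fun b => g' (a, b)) S + ENNReal.ofReal δ) ∂μ :=
        lintegral_mono_ae (h.mono fun a ha => ha S hS)
    _ = ENNReal.ofReal (exp ε) * ∫⁻ a, ν.map (fun b => g' (a, b)) S ∂μ + ENNReal.ofReal δ := by
        rw [lintegral_add_right _ measurable_const, lintegral_const_mul' _ _ ENNReal.ofReal_ne_top,
          lintegral_const, measure_univ, mul_one]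

end DPBound

lemma measurable_mdot_add {n p : ℕ} (X : Mat n p) :
    Measurable fun AC : Mat n n × Mat n p => mdot AC.1 X + AC.2 := by
  unfold mdot; fun_prop

theorem stmt1_general {n p : ℕ} (σ₀ ε δ : ℝ)
    (X X' : Mat n p)
    (μ : Measure (Mat n n)) (hHaar : IsHaarOrth μ)
    (hA : ∀ S : Set (Mat n p), MeasurableSet S →
      (gaussNoise n p σ₀).map (fun c => X + c) S ≤
        ENNReal.ofReal (Real.exp ε) * (gaussNoise n p σ₀).map (fun c => X' + c) S
          + ENNReal.ofReal δ) :
    ∀ S : Set (Mat n p), MeasurableSet S →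
      (μ.prod (gaussNoise n p σ₀)).map (fun Ac => mdot Ac.1 X + Ac.2) S ≤
        ENNReal.ofReal (Real.exp ε) *
          (μ.prod (gaussNoise n p σ₀)).map (fun Ac => mdot Ac.1 X' + Ac.2) S
          + ENNReal.ofReal δ := by
  obtain ⟨hprob, horth, -⟩ := hHaar
  refine DPBound.prod_map (measurable_mdot_add X) (measurable_mdot_add X') ?_
  filter_upwards [ae_iff.mpr horth] with A hA_orth
  rw [map_mdot_add_left (gaussNoise_map_mdot σ₀ hA_orth),
    map_mdot_add_left (gaussNoise_map_mdot σ₀ hA_orth)]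
  exact DPBound.map hA (measurable_mdot_left A)

/-- If the additive-noise mechanism `Y(X) = X + C` (setting (A)),
with `C` an n×p matrix of i.i.d. N(0, σ₀²) entries, is (ε, δ)-differentially private
for the given pair `X, X'` (entries bounded by 1, differing only in the first row,
with ‖X − X'‖ ≤ 1 in Frobenius norm), then the mechanism `Y(X) = A X + C`
(setting (C)), with `A` Haar-uniform on the orthogonal group O(n) independent of `C`,
is also (ε, δ)-differentially private for the same pair. -/
theorem stmt1 {n p : ℕ} (hn : 0 < n) (σ₀ ε δ : ℝ) (hσ : 0 < σ₀)
    (X X' : Mat n p)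
    (hXb : ∀ i j, |X i j| ≤ 1) (hX'b : ∀ i j, |X' i j| ≤ 1)
    (hrow : ∀ k : Fin n, k ≠ ⟨0, hn⟩ → X k = X' k)
    (hnorm : frob (X - X') ≤ 1)
    (μ : Measure (Mat n n)) (hHaar : IsHaarOrth μ)
    (hA : ∀ S : Set (Mat n p), MeasurableSet S →
      (gaussNoise n p σ₀).map (fun c => X + c) S ≤
        ENNReal.ofReal (Real.exp ε) * (gaussNoise n p σ₀).map (fun c => X' + c) S
          + ENNReal.ofReal δ) :
    ∀ S : Set (Mat n p), MeasurableSet S →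
      (μ.prod (gaussNoise n p σ₀)).map (fun Ac => mdot Ac.1 X + Ac.2) S ≤
        ENNReal.ofReal (Real.exp ε) *
          (μ.prod (gaussNoise n p σ₀)).map (fun Ac => mdot Ac.1 X' + Ac.2) S
          + ENNReal.ofReal δ :=
  stmt1_general σ₀ ε δ X X' μ hHaar hA
end
end

section
/- Let Y(X) be a data release mechanism such that for every input matrix X, the distribution of Y(X) is absolutely continuous with respect to Lebesgue measure with density p_{Y(X)}. For neighboring X and X', define S̄_{X,X'} = {y : p_{Y(X)}(y) > e^ε p_{Y(X')}(y)}. If there exists a neighboring pair X, X' with P[Y(X) ∈ S̄_{X,X'}] > δ, then for every 0 < ε' < ε, the mechanism Y(X) is not (ε', δ')-differentially private with δ' = (1 − e^{ε'}/e^ε)·δ; that is, there exist a measurable set S and a neighboring pair X, X' such that P[Y(X) ∈ S] > e^{ε'} P[Y(X') ∈ S] + δ'. -/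
open MeasureTheory ProbabilityTheory Real

noncomputable section

/-!
On `T ⊆ S̄` the density of `Y(X')` is at most `e^{-ε}` times that of `Y(X)`, so
`e^{ε'} P[Y(X') ∈ T] ≤ r P[Y(X) ∈ T]` with `r = e^{ε'-ε} < 1`, while `δ' = (1 - r) δ`.
The right-hand side `r P[Y(X) ∈ T] + (1 - r) δ` is then a proper convex combination of
`P[Y(X) ∈ T]` and the smaller number `δ`. This needs `P[Y(X) ∈ T] < ∞`, which may fail for
`T = S̄`; instead `T` is a finite-measure piece of `S̄` still carrying mass more than `δ`,
which exists because a law with a real-valued density is σ-finite.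
-/

theorem ENNReal.ofReal_mul_add_ofReal_one_sub_mul_lt {a d : ENNReal} {r : ℝ}
    (hr0 : 0 ≤ r) (hr1 : r < 1) (ha : a ≠ ⊤) (hda : d < a) :
    ENNReal.ofReal r * a + ENNReal.ofReal (1 - r) * d < a := by
  calc ENNReal.ofReal r * a + ENNReal.ofReal (1 - r) * d
      < ENNReal.ofReal r * a + ENNReal.ofReal (1 - r) * a :=
        ENNReal.add_lt_add_left (ENNReal.mul_ne_top ENNReal.ofReal_ne_top ha)
          ((ENNReal.mul_lt_mul_iff_right (ENNReal.ofReal_pos.2 (by linarith)).ne'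
            ENNReal.ofReal_ne_top).2 hda)
    _ = a := by
        rw [← add_mul, ← ENNReal.ofReal_add hr0 (by linarith)]
        simp

theorem MeasureTheory.withDensity_ofReal_apply_le_mul {α : Type*} [MeasurableSpace α]
    {μ : Measure α} {g h : α → ℝ} (hg : Measurable g) {T : Set α} (hT : MeasurableSet T)
    {c : ℝ} (hc : 0 ≤ c) (hhg : ∀ y ∈ T, h y ≤ c * g y) :
    μ.withDensity (fun y => ENNReal.ofReal (h y)) T
      ≤ ENNReal.ofReal c * μ.withDensity (fun y => ENNReal.ofReal (g y)) T := by
  rw [withDensity_apply _ hT, withDensity_apply _ hT,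
    ← lintegral_const_mul _ hg.ennreal_ofReal]
  refine setLIntegral_mono (hg.ennreal_ofReal.const_mul _) fun y hy => ?_
  rw [← ENNReal.ofReal_mul hc]
  exact ENNReal.ofReal_le_ofReal (hhg y hy)

/-- Let `P X` be the law of a data release mechanism `Y(X)` which is
absolutely continuous with density `f X` with respect to Lebesgue measure. If there is
a neighboring pair `X, X'` for which the set `S̄_{X,X'} = {y : f X y > e^ε f X' y}`
satisfies `P[Y(X) ∈ S̄_{X,X'}] > δ`, then for every `0 < ε' < ε` the mechanism is not
(ε', δ')-differentially private with `δ' = (1 − e^{ε'}/e^ε) δ`: there is a measurable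
set `S` and a neighboring pair witnessing the violation. -/
theorem stmt3 {n p : ℕ} (ε δ : ℝ)
    (P : Mat n p → Measure (Mat n p))
    (f : Mat n p → Mat n p → ℝ)
    (hf : ∀ X, Measurable (f X))
    (hdens : ∀ X, P X = volume.withDensity fun y => ENNReal.ofReal (f X y))
    (hS : ∃ X X' : Mat n p, Neighbors X X' ∧
      ENNReal.ofReal δ < P X {y | f X y > Real.exp ε * f X' y}) :
    ∀ ε' : ℝ, 0 < ε' → ε' < ε →
      ∃ S : Set (Mat n p), MeasurableSet S ∧ ∃ X X' : Mat n p, Neighbors X X' ∧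
        ENNReal.ofReal (Real.exp ε') * P X' S
            + ENNReal.ofReal ((1 - Real.exp ε' / Real.exp ε) * δ) < P X S := by
  obtain ⟨X, X', hN, hδ⟩ := hS
  intro ε' _ hε'ε
  have hSm : MeasurableSet {y | f X y > Real.exp ε * f X' y} :=
    measurableSet_lt ((hf X').const_mul _) (hf X)
  have : SigmaFinite (P X) := hdens X ▸ SigmaFinite.withDensity_ofReal _
  obtain ⟨T, hTm, hTS, hδT, hTfin⟩ := Measure.exists_subset_measure_lt_top hSm hδ
  have hdom : P X' T ≤ ENNReal.ofReal (Real.exp (-ε)) * P X T := by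
    rw [hdens X, hdens X']
    refine withDensity_ofReal_apply_le_mul (hf X) hTm (exp_pos _).le fun y hy => ?_
    have hy : Real.exp ε * f X' y < f X y := hTS hy
    rw [exp_neg, ← div_eq_inv_mul, le_div_iff₀ (exp_pos ε)]
    linarith
  have hr : Real.exp ε' / Real.exp ε = Real.exp ε' * Real.exp (-ε) := by
    rw [exp_neg, div_eq_mul_inv]
  have hr1 : Real.exp ε' / Real.exp ε < 1 := (div_lt_one (exp_pos ε)).2 (exp_lt_exp.2 hε'ε)
  refine ⟨T, hTm, X, X', hN, ?_⟩
  calc ENNReal.ofReal (Real.exp ε') * P X' T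
        + ENNReal.ofReal ((1 - Real.exp ε' / Real.exp ε) * δ)
      ≤ ENNReal.ofReal (Real.exp ε' / Real.exp ε) * P X T
        + ENNReal.ofReal (1 - Real.exp ε' / Real.exp ε) * ENNReal.ofReal δ := by
        rw [hr, ENNReal.ofReal_mul (exp_pos _).le, mul_assoc, ← hr,
          ENNReal.ofReal_mul (by linarith)]
        gcongr
    _ < P X T := ENNReal.ofReal_mul_add_ofReal_one_sub_mul_lt (by positivity) hr1 hTfin.ne hδT
end
end

section
/- Let X and X' be n×p real matrices that differ only in their first row, let Δ = X' − X, and consider the mechanism Y(X) = X + C where C is an n×p matrix of i.i.d. N(0, σ²) entries. Let S̄_{X,X'} = {y : p_{Y(X)}(y) > e^ε p_{Y(X')}(y)}, where p_{Y(X)} is the density of Y(X). Then the condition P[Y(X) ∈ S̄_{X,X'}] ≤ δ holds if and only if γ̄_δ ≤ σε/‖Δ‖ − ‖Δ‖/(2σ), where γ̄_δ is the upper δ-quantile of the standard normal distribution N(0,1) and ‖·‖ is the Frobenius norm. -/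
open MeasureTheory ProbabilityTheory Real

noncomputable section

/-- The density at `y` of the Gaussian mechanism `X + C`, where `C` has
i.i.d. N(0, σ²) entries: `(2πσ²)^{−np/2} exp(−‖y − X‖²/(2σ²))`. -/
def gaussDens {n p : ℕ} (σ : ℝ) (X y : Mat n p) : ℝ :=
  (2 * π * σ ^ 2) ^ (-(n * p : ℝ) / 2) * Real.exp (-(frob (y - X) ^ 2) / (2 * σ ^ 2))
/-- The law of the mechanism `Y(X) = X + C` (setting (A)). -/
def lawA {n p : ℕ} (σ : ℝ) (X : Mat n p) : Measure (Mat n p) :=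
  (gaussNoise n p σ).map (fun c => X + c)

/-!
The log-likelihood ratio of the two Gaussian densities at `y = X + c` is affine in the noise:
`log (p_X(y) / p_X'(y)) = (‖Δ‖² - 2⟪Δ, c⟫) / (2σ²)`. So `S̄_{X,X'}` pulls back to the half-space
`⟪Δ, c⟫ < (‖Δ‖² - 2σ²ε) / 2`, and `⟪Δ, C⟫ ~ N(0, σ²‖Δ‖²)` as a linear combination of independent
Gaussians. Standardizing, `P[Y(X) ∈ S̄] = P[Z > σε/‖Δ‖ - ‖Δ‖/(2σ)]`, and since the Gaussian tail is
strictly decreasing this is at most `δ = P[Z > γ̄_δ]` exactly when `γ̄_δ` lies below the threshold.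
-/

open scoped NNReal

lemma map_finsetSum_eq_gaussianReal {Ω ι : Type*} {mΩ : MeasurableSpace Ω} {P : Measure Ω}
    [IsProbabilityMeasure P] {X : ι → Ω → ℝ} (hindep : iIndepFun X P)
    (hmeas : ∀ i, Measurable (X i)) {m : ι → ℝ} {v : ι → ℝ≥0}
    (hlaw : ∀ i, P.map (X i) = gaussianReal (m i) (v i)) (s : Finset ι) :
    P.map (∑ i ∈ s, X i) = gaussianReal (∑ i ∈ s, m i) (∑ i ∈ s, v i) := by
  classical
  induction s using Finset.induction_on with
  | empty => simp [gaussianReal_zero_var, Pi.zero_def]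
  | insert a s has ih =>
    rw [Finset.sum_insert has, Finset.sum_insert has, Finset.sum_insert has, add_comm (X a),
      add_comm (m a), add_comm (v a)]
    exact gaussianReal_add_gaussianReal_of_indepFun
      (hindep.indepFun_finsetSum_of_notMem hmeas has) ih (hlaw a)

lemma map_pi_sum_eq_gaussianReal {ι : Type*} [Fintype ι] {Ω : ι → Type*}
    [∀ i, MeasurableSpace (Ω i)] {μ : ∀ i, Measure (Ω i)} [∀ i, IsProbabilityMeasure (μ i)]
    {f : ∀ i, Ω i → ℝ} (hf : ∀ i, Measurable (f i)) {m : ι → ℝ} {v : ι → ℝ≥0}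
    (hlaw : ∀ i, (μ i).map (f i) = gaussianReal (m i) (v i)) :
    (Measure.pi μ).map (fun ω ↦ ∑ i, f i (ω i)) = gaussianReal (∑ i, m i) (∑ i, v i) := by
  have hlaw' : ∀ i, (Measure.pi μ).map (fun ω ↦ f i (ω i)) = gaussianReal (m i) (v i) :=
    fun i ↦ by
      rw [← hlaw i, ← (measurePreserving_eval μ i).map_eq, Measure.map_map (hf i) (by fun_prop)]
      rfl
  simpa [Finset.sum_fn] using map_finsetSum_eq_gaussianReal
    (iIndepFun_pi fun i ↦ (hf i).aemeasurable) (fun i ↦ (hf i).comp (measurable_pi_apply i))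
    hlaw' Finset.univ

section Frobenius

variable {n p : ℕ}

def frobInner (A B : Mat n p) : ℝ := ∑ i, ∑ j, A i j * B i j

lemma measurable_frobInner (A : Mat n p) : Measurable (frobInner A) := by
  unfold frobInner
  fun_prop

lemma frob_sq (M : Mat n p) : frob M ^ 2 = ∑ i, ∑ j, M i j ^ 2 :=
  Real.sq_sqrt (by positivity)

lemma frob_pos {M : Mat n p} (hM : M ≠ 0) : 0 < frob M := by
  obtain ⟨i, j, hij⟩ : ∃ i j, M i j ≠ 0 := by
    by_contra! h
    exact hM (funext fun i ↦ funext (h i))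
  refine Real.sqrt_pos.2 (Finset.sum_pos' (fun _ _ ↦ by positivity) ⟨i, Finset.mem_univ _, ?_⟩)
  exact Finset.sum_pos' (fun _ _ ↦ by positivity) ⟨j, Finset.mem_univ _, by positivity⟩

lemma frob_sub_sq (A B : Mat n p) :
    frob (A - B) ^ 2 = frob A ^ 2 - 2 * frobInner B A + frob B ^ 2 := by
  simp only [frob_sq, frobInner, Finset.mul_sum, ← Finset.sum_sub_distrib,
    ← Finset.sum_add_distrib]
  refine Finset.sum_congr rfl fun i _ ↦ Finset.sum_congr rfl fun j _ ↦ ?_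
  simp only [Pi.sub_apply]
  ring

end Frobenius

lemma gaussNoise_map_frobInner {n p : ℕ} (σ : ℝ) (Δ : Mat n p) :
    (gaussNoise n p σ).map (frobInner Δ) = gaussianReal 0 ⟨(σ * frob Δ) ^ 2, sq_nonneg _⟩ := by
  -- instance search does not unify `gaussianReal ?m ?v` with the variance as written in `gaussNoise`
  have : IsProbabilityMeasure (gaussianReal 0 ⟨σ ^ 2, sq_nonneg σ⟩) :=
    instIsProbabilityMeasureGaussianReal _ _
  have hrow (i : Fin n) := map_pi_sum_eq_gaussianReal (fun j ↦ measurable_const_mul (Δ i j))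
    (fun j ↦ gaussianReal_map_const_mul (μ := 0) (v := ⟨σ ^ 2, sq_nonneg σ⟩) (Δ i j))
  simp only [mul_zero, Finset.sum_const_zero] at hrow
  rw [gaussNoise, show frobInner Δ = fun c ↦ ∑ i, ∑ j, Δ i j * c i j from rfl,
    map_pi_sum_eq_gaussianReal (fun i ↦ by fun_prop) hrow, Finset.sum_const_zero]
  congr 1
  ext
  simp only [NNReal.coe_sum]
  change ∑ i, ∑ j, Δ i j ^ 2 * σ ^ 2 = (σ * frob Δ) ^ 2
  simp only [mul_pow, frob_sq, Finset.sum_mul, mul_comm (σ ^ 2)]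

lemma gaussianReal_sq_Iio_eq_Ioi {s : ℝ} (hs : 0 < s) (t : ℝ) :
    gaussianReal 0 ⟨s ^ 2, sq_nonneg s⟩ (Set.Iio t) = gaussianReal 0 1 (Set.Ioi (-t / s)) := by
  have hmap : (gaussianReal 0 1).map ((-s) * ·) = gaussianReal 0 ⟨s ^ 2, sq_nonneg s⟩ := by
    rw [gaussianReal_map_const_mul, mul_zero, mul_one]
    congr 2
    ring
  rw [← hmap, Measure.map_apply (measurable_const_mul _) measurableSet_Iio]
  congr 1
  ext x
  simp only [Set.mem_preimage, Set.mem_Iio, Set.mem_Ioi, div_lt_iff₀ hs]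
  constructor <;> intro <;> linarith

lemma gaussianReal_Ioi_le_Ioi_iff (m : ℝ) {v : ℝ≥0} (hv : v ≠ 0) (u γ : ℝ) :
    gaussianReal m v (Set.Ioi u) ≤ gaussianReal m v (Set.Ioi γ) ↔ γ ≤ u := by
  refine ⟨fun hle ↦ ?_, fun hγu ↦ measure_mono (Set.Ioi_subset_Ioi hγu)⟩
  by_contra! hu
  have hpos : gaussianReal m v (Set.Ioc u γ) ≠ 0 := fun h ↦
    hu.not_ge (by simpa using gaussianReal_absolutelyContinuous' m hv h)
  rw [← Set.Ioc_union_Ioi_eq_Ioi hu.le, measure_union (Set.Ioc_disjoint_Ioi le_rfl)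
    measurableSet_Ioi] at hle
  exact (ENNReal.lt_add_right (measure_ne_top _ _) hpos).not_ge (by rwa [add_comm] at hle)

lemma exp_mul_gaussDens_lt_gaussDens_iff {n p : ℕ} {σ : ℝ} (hσ : σ ≠ 0) (ε : ℝ)
    (X X' c : Mat n p) :
    Real.exp ε * gaussDens σ X' (X + c) < gaussDens σ X (X + c) ↔
      frobInner (X' - X) c < (frob (X' - X) ^ 2 - 2 * σ ^ 2 * ε) / 2 := by
  have hnorm : 0 < (2 * π * σ ^ 2) ^ (-(n * p : ℝ) / 2) := by positivity
  have hshift : X + c - X' = c - (X' - X) := by abel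
  have hexponent : -frob c ^ 2 / (2 * σ ^ 2) - (ε + -frob (c - (X' - X)) ^ 2 / (2 * σ ^ 2)) =
      ((frob (X' - X) ^ 2 - 2 * σ ^ 2 * ε) / 2 - frobInner (X' - X) c) / σ ^ 2 := by
    rw [frob_sub_sq]
    field_simp
    ring
  rw [gaussDens, gaussDens, add_sub_cancel_left, hshift, mul_left_comm, ← Real.exp_add,
    mul_lt_mul_iff_right₀ hnorm, Real.exp_lt_exp, ← sub_pos, hexponent,
    div_pos_iff_of_pos_right (by positivity), sub_pos]

theorem stmt6_general {n p : ℕ} (σ ε δ γ : ℝ) (hσ : 0 < σ)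
    (hγ : gaussianReal 0 1 (Set.Ioi γ) = ENNReal.ofReal δ)
    (X X' : Mat n p)
    (hne : X ≠ X') :
    lawA σ X {y | gaussDens σ X y > Real.exp ε * gaussDens σ X' y}
        ≤ ENNReal.ofReal δ ↔
      γ ≤ σ * ε / frob (X' - X) - frob (X' - X) / (2 * σ) := by
  set d := frob (X' - X)
  have hd : 0 < d := frob_pos (sub_ne_zero.2 hne.symm)
  have hpre : (X + ·) ⁻¹' {y | gaussDens σ X y > Real.exp ε * gaussDens σ X' y} =
      frobInner (X' - X) ⁻¹' Set.Iio ((d ^ 2 - 2 * σ ^ 2 * ε) / 2) := by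
    ext c
    exact exp_mul_gaussDens_lt_gaussDens_iff hσ.ne' ε X X' c
  have hthreshold : -((d ^ 2 - 2 * σ ^ 2 * ε) / 2) / (σ * d) = σ * ε / d - d / (2 * σ) := by
    field_simp
    ring
  rw [lawA, (measurableEmbedding_addLeft X).map_apply, hpre,
    ← Measure.map_apply (measurable_frobInner _) measurableSet_Iio, gaussNoise_map_frobInner,
    gaussianReal_sq_Iio_eq_Ioi (mul_pos hσ hd), hthreshold, ← hγ,
    gaussianReal_Ioi_le_Ioi_iff 0 one_ne_zero]

/-- Let `X, X'` differ only in their first row, `Δ = X' − X ≠ 0`, and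
consider the mechanism `Y(X) = X + C` with `C` i.i.d. N(0, σ²) entries, whose density
is `gaussDens σ X`. Then `P[Y(X) ∈ S̄_{X,X'}] ≤ δ` holds if and only if
`γ̄_δ ≤ σε/‖Δ‖ − ‖Δ‖/(2σ)`, where `γ̄_δ` is the upper δ-quantile of N(0,1). -/
theorem stmt6 {n p : ℕ} (hn : 0 < n) (σ ε δ γ : ℝ) (hσ : 0 < σ)
    (hγ : gaussianReal 0 1 (Set.Ioi γ) = ENNReal.ofReal δ)
    (X X' : Mat n p)
    (hrow : ∀ k : Fin n, k ≠ ⟨0, hn⟩ → X k = X' k)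
    (hne : X ≠ X') :
    lawA σ X {y | gaussDens σ X y > Real.exp ε * gaussDens σ X' y}
        ≤ ENNReal.ofReal δ ↔
      γ ≤ σ * ε / frob (X' - X) - frob (X' - X) / (2 * σ) :=
  stmt6_general σ ε δ γ hσ hγ X X' hne
end
end

section
/- Let n, p ≥ 1 and 0 < δ < 1, and let γ_{δ,np} be the upper δ-quantile of the chi-square distribution with np degrees of freedom, i.e., P[χ²_{np} > γ_{δ,np}] = δ. Then γ_{δ,np} ≤ 2np + 3 ln(1/δ). -/
/-!
Chernoff bound at `t = 1/3`: a standard Gaussian `Z` has `𝔼 exp (t Z²) = (1 - 2t)^(-1/2)`, so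
`𝔼 exp (χ²_k / 3) = 3^(k/2)` and `P[χ²_k ≥ 2k + 3 log (1/δ)] ≤ δ (√3 e^(-2/3))^k < δ`.
Hence the point where the upper tail equals `δ` lies below `2k + 3 log (1/δ)`.
-/

open MeasureTheory ProbabilityTheory Real

noncomputable section

/-- The chi-square distribution with `k` degrees of freedom: the law of the sum of
squares of `k` independent standard Gaussian random variables. -/
def chiSq (k : ℕ) : Measure ℝ :=
  (Measure.pi fun _ : Fin k => gaussianReal 0 1).map fun x => ∑ i, (x i) ^ 2

lemma gaussianPDFReal_mul_exp_mul_sq (t x : ℝ) :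
    gaussianPDFReal 0 1 x * exp (t * x ^ 2) = (√(2 * π))⁻¹ * exp (-(1 / 2 - t) * x ^ 2) := by
  simp only [gaussianPDFReal, NNReal.coe_one, mul_one, sub_zero]
  rw [mul_assoc, ← exp_add]
  ring_nf

lemma integrable_exp_mul_sq_gaussianReal {t : ℝ} (ht : t < 1 / 2) :
    Integrable (fun x => exp (t * x ^ 2)) (gaussianReal 0 1) := by
  rw [gaussianReal_of_var_ne_zero 0 one_ne_zero, gaussianPDF_def,
    integrable_withDensity_iff_integrable_smul' (measurable_gaussianPDFReal 0 1).ennreal_ofReal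
      (by simp)]
  simp only [ENNReal.toReal_ofReal (gaussianPDFReal_nonneg 0 1 _), smul_eq_mul,
    gaussianPDFReal_mul_exp_mul_sq]
  exact (integrable_exp_neg_mul_sq (by linarith)).const_mul _

-- For `t ≥ 1/2` both sides are `0`: the integral diverges and `√` of a nonpositive number is `0`.
lemma mgf_sq_gaussianReal (t : ℝ) :
    mgf (fun x => x ^ 2) (gaussianReal 0 1) t = (√(1 - 2 * t))⁻¹ := by
  rw [mgf, integral_gaussianReal_eq_integral_smul one_ne_zero]
  simp only [smul_eq_mul, gaussianPDFReal_mul_exp_mul_sq]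
  rw [integral_const_mul, integral_gaussian, ← sqrt_inv, ← sqrt_mul (by positivity), ← sqrt_inv]
  congr 1
  field_simp

lemma measurable_sum_sq {ι : Type*} [Fintype ι] : Measurable fun x : ι → ℝ => ∑ i, x i ^ 2 := by
  fun_prop

instance isProbabilityMeasure_chiSq (k : ℕ) : IsProbabilityMeasure (chiSq k) :=
  Measure.isProbabilityMeasure_map measurable_sum_sq.aemeasurable

lemma integrable_exp_mul_chiSq {t : ℝ} (ht : t < 1 / 2) (k : ℕ) :
    Integrable (fun x => exp (t * x)) (chiSq k) := by
  rw [chiSq, integrable_map_measure (by fun_prop) measurable_sum_sq.aemeasurable]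
  simp only [Function.comp_def, Finset.mul_sum, exp_sum]
  exact Integrable.fintype_prod fun _ => integrable_exp_mul_sq_gaussianReal ht

lemma mgf_chiSq (k : ℕ) (t : ℝ) : mgf id (chiSq k) t = (√(1 - 2 * t))⁻¹ ^ k := by
  rw [chiSq, mgf_id_map measurable_sum_sq.aemeasurable, mgf]
  simp only [Finset.mul_sum, exp_sum]
  rw [integral_fintype_prod_eq_pow (fun x => exp (t * x ^ 2)), ← mgf, mgf_sq_gaussianReal,
    Fintype.card_fin]

lemma chiSq_real_Ici_le {t : ℝ} (ht₀ : 0 ≤ t) (ht : t < 1 / 2) (k : ℕ) (ε : ℝ) :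
    (chiSq k).real (Set.Ici ε) ≤ exp (-t * ε) * (√(1 - 2 * t))⁻¹ ^ k := by
  rw [← mgf_chiSq]
  exact measure_ge_le_exp_mul_mgf ε ht₀ (integrable_exp_mul_chiSq ht k)

lemma sqrt_three_mul_exp_neg_two_thirds_lt_one : √3 * exp (-(2 / 3)) < 1 := by
  have h : (3 : ℝ) < exp (2 / 3) ^ 2 := by
    rw [← exp_nat_mul]
    have := quadratic_le_exp_of_nonneg (x := (2 : ℕ) * (2 / 3 : ℝ)) (by positivity)
    norm_num at this ⊢
    linarith
  rw [← lt_div_iff₀ (exp_pos _), exp_neg, div_inv_eq_mul, one_mul]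
  exact (sqrt_lt' (exp_pos _)).2 h

theorem stmt19_general (n p : ℕ) (hn : 1 ≤ n) (hp : 1 ≤ p) (δ γ : ℝ)
    (hδ0 : 0 < δ)
    (hγ : chiSq (n * p) (Set.Ioi γ) = ENNReal.ofReal δ) :
    γ ≤ 2 * ((n : ℝ) * p) + 3 * Real.log (1 / δ) := by
  by_contra! hlt
  set k := n * p
  set B := 2 * ((n : ℝ) * p) + 3 * Real.log (1 / δ)
  have hexponent : -(1 / 3) * B = k * (-(2 / 3)) + log δ := by
    simp only [B, k, one_div, log_inv]
    push_cast
    ring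
  have hsqrt : (√(1 - 2 * (1 / 3 : ℝ)))⁻¹ = √3 := by
    rw [← sqrt_inv]
    norm_num
  have hk : k ≠ 0 := by positivity
  have := calc
    δ = (chiSq k).real (Set.Ioi γ) := by rw [measureReal_def, hγ, ENNReal.toReal_ofReal hδ0.le]
    _ ≤ (chiSq k).real (Set.Ici B) := measureReal_mono (Set.Ioi_subset_Ici hlt.le)
    _ ≤ exp (-(1 / 3) * B) * (√(1 - 2 * (1 / 3)))⁻¹ ^ k :=
      chiSq_real_Ici_le (by norm_num) (by norm_num) k B
    _ = δ * (√3 * exp (-(2 / 3))) ^ k := by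
      rw [hexponent, exp_add, exp_nat_mul, exp_log hδ0, hsqrt]
      ring
    _ < δ := mul_lt_of_lt_one_right hδ0
      (pow_lt_one₀ (by positivity) sqrt_three_mul_exp_neg_two_thirds_lt_one hk)
  exact lt_irrefl δ this

/-- Let `n, p ≥ 1`, `0 < δ < 1`, and let `γ_{δ,np}` be the upper
δ-quantile of the chi-square distribution with `np` degrees of freedom, i.e.
`P[χ²_{np} > γ_{δ,np}] = δ`. Then `γ_{δ,np} ≤ 2np + 3 ln(1/δ)`. -/
theorem stmt19 (n p : ℕ) (hn : 1 ≤ n) (hp : 1 ≤ p) (δ γ : ℝ)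
    (hδ0 : 0 < δ) (hδ1 : δ < 1)
    (hγ : chiSq (n * p) (Set.Ioi γ) = ENNReal.ofReal δ) :
    γ ≤ 2 * ((n : ℝ) * p) + 3 * Real.log (1 / δ) :=
  stmt19_general n p hn hp δ γ hδ0 hγ
end
end
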